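/- Assume in addition η > 0 and κ > 0. Then every eigenvalue λ of problem (P) satisfies Re(λ) < 0; in particular (P) has no purely imaginary eigenvalues. -/

import Mathlib

/-!
Pairing the equation with `w̄` and integrating by parts, the boundary conditions turn it into the
quadratic `‖w‖² λ² + E λ + C = 0` with `C = ‖w''‖² + (γ - η²) ‖w'‖² ≥ 0` and
`Re E = βη |w(1)|² + κ |w'(1)|²` (the real part of `2 ∫ w̄ w'` is `|w(1)|² - |w(0)|²`).
Dividing by `λ` and taking real parts, `Re λ ≥ 0` would force `Re E ≤ 0`.
But `Re E > 0`: otherwise `w(1) = w'(1) = 0`, the boundary conditions at `1` give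
`w''(1) = w'''(1) = 0`, and uniqueness for the linear ODE gives `w = 0`.
And `λ ≠ 0`: for `λ = 0` the identity gives `C = 0`, so `w' = 0` and `w = w(0) = 0`.
-/

open Set Complex

/-- An eigenpair of problem (P): `w` is a nonzero `C⁴` function on `[0,1]`
satisfying the ODE `w'''' − (γ−η²)w'' + 2λβη w' + λ²w = 0` together with the
boundary conditions `w(0) = w''(0) = 0`, `w''(1) + λκ w'(1) = 0`,
`w'''(1) − (γ−η²) w'(1) = 0`. -/
def IsEigenpairP (β η γ κ : ℝ) (l : ℂ) (w : ℝ → ℂ) : Prop :=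
  ContDiff ℝ 4 w ∧ (∃ s ∈ Icc (0:ℝ) 1, w s ≠ 0) ∧
  (∀ s ∈ Icc (0:ℝ) 1,
    iteratedDeriv 4 w s - ((γ - η^2 : ℝ) : ℂ) * iteratedDeriv 2 w s
      + 2 * l * ((β * η : ℝ) : ℂ) * deriv w s + l^2 * w s = 0) ∧
  w 0 = 0 ∧ iteratedDeriv 2 w 0 = 0 ∧
  iteratedDeriv 2 w 1 + l * ((κ : ℝ) : ℂ) * deriv w 1 = 0 ∧
  iteratedDeriv 3 w 1 - ((γ - η^2 : ℝ) : ℂ) * deriv w 1 = 0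

/-- An eigenvalue of problem (P). -/
def IsEigenvalueP (β η γ κ : ℝ) (l : ℂ) : Prop :=
  ∃ w : ℝ → ℂ, IsEigenpairP β η γ κ l w

open MeasureTheory intervalIntegral
open scoped ComplexConjugate NNReal

theorem eqOn_zero_of_intervalIntegral_eq_zero {f : ℝ → ℝ} {a b : ℝ} (hab : a < b)
    (hf : Continuous f) (hf0 : 0 ≤ f) (h : ∫ x in a..b, f x = 0) : EqOn f 0 (Icc a b) := by
  rw [integral_eq_zero_iff_of_le_of_nonneg_ae hab.le (.of_forall hf0) (hf.intervalIntegrable a b),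
    Measure.restrict_congr_set Ioc_ae_eq_Icc] at h
  exact Measure.eqOn_Icc_of_ae_eq volume hab.ne h hf.continuousOn continuousOn_const

theorem ContDiff.hasDerivAt_iteratedDeriv {𝕜 F : Type*} [NontriviallyNormedField 𝕜]
    [NormedAddCommGroup F] [NormedSpace 𝕜 F] {f : 𝕜 → F} {n k : ℕ} (hf : ContDiff 𝕜 n f)
    (hk : k < n) (x : 𝕜) : HasDerivAt (iteratedDeriv k f) (iteratedDeriv (k + 1) f x) x := by
  rw [iteratedDeriv_succ]
  exact (hf.differentiable_iteratedDeriv k (mod_cast hk) x).hasDerivAt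

theorem integral_conj_iteratedDeriv_mul_iteratedDeriv_succ {n m k : ℕ} {w : ℝ → ℂ}
    (hw : ContDiff ℝ n w) (hm : m < n) (hk : k < n) (a b : ℝ) :
    ∫ s in a..b, conj (iteratedDeriv m w s) * iteratedDeriv (k + 1) w s =
      conj (iteratedDeriv m w b) * iteratedDeriv k w b
        - conj (iteratedDeriv m w a) * iteratedDeriv k w a
        - ∫ s in a..b, conj (iteratedDeriv (m + 1) w s) * iteratedDeriv k w s :=
  integral_mul_deriv_eq_deriv_mul (fun x _ => (hw.hasDerivAt_iteratedDeriv hm x).star)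
    (fun x _ => hw.hasDerivAt_iteratedDeriv hk x)
    ((continuous_conj.comp (hw.continuous_iteratedDeriv _ (mod_cast hm))).intervalIntegrable a b)
    ((hw.continuous_iteratedDeriv _ (mod_cast hk)).intervalIntegrable a b)

theorem two_mul_re_integral_conj_mul_deriv {w : ℝ → ℂ} (hw : ContDiff ℝ 1 w) (a b : ℝ) :
    2 * (∫ s in a..b, conj (w s) * deriv w s).re = normSq (w b) - normSq (w a) := by
  have hibp := integral_conj_iteratedDeriv_mul_iteratedDeriv_succ (m := 0) (k := 0)
    (mod_cast hw) one_pos one_pos a b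
  simp only [zero_add, iteratedDeriv_zero, iteratedDeriv_one] at hibp
  rw [show (∫ s in a..b, conj (deriv w s) * w s) = conj (∫ s in a..b, conj (w s) * deriv w s) by
    rw [← intervalIntegral_conj]; simp [mul_comm]] at hibp
  have := congrArg re hibp
  simp only [sub_re, conj_re, ← normSq_eq_conj_mul_self, ofReal_re] at this
  linarith

theorem eqOn_zero_of_hasDerivAt_of_lipschitzWith {E : Type*} [NormedAddCommGroup E]
    [NormedSpace ℝ E] {v : E → E} {K : ℝ≥0} (hv : LipschitzWith K v) (hv0 : v 0 = 0)
    {f : ℝ → E} {a b : ℝ} (hf : ∀ t ∈ Icc a b, HasDerivAt f (v (f t)) t) (hfb : f b = 0) :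
    EqOn f 0 (Icc a b) :=
  ODE_solution_unique_of_mem_Icc_left (v := fun _ => v) (s := fun _ => univ)
    (fun _ _ => hv.lipschitzOnWith) (HasDerivAt.continuousOn hf)
    (fun t ht => (hf t (Ioc_subset_Icc_self ht)).hasDerivWithinAt) (fun _ _ => mem_univ _)
    continuousOn_const
    (fun t _ => by simp only [Pi.zero_apply, hv0]; exact hasDerivWithinAt_const t _ (0 : E))
    (fun _ _ => mem_univ _) hfb

def companionMap {n : ℕ} (c : Fin n → ℂ) : (Fin n → ℂ) →ₗ[ℂ] Fin n → ℂ where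
  toFun x i := if h : (i : ℕ) + 1 < n then x ⟨i + 1, h⟩ else ∑ j, c j * x j
  map_add' x y := by
    ext i; by_cases h : (i : ℕ) + 1 < n <;> simp [h, mul_add, Finset.sum_add_distrib]
  map_smul' r x := by
    ext i; by_cases h : (i : ℕ) + 1 < n <;> simp [h, Finset.mul_sum, mul_left_comm]

theorem eqOn_zero_of_iteratedDeriv_eq_sum {n : ℕ} (c : Fin n → ℂ) {w : ℝ → ℂ} {a b : ℝ}
    (hw : ContDiff ℝ n w)
    (hode : ∀ s ∈ Icc a b, iteratedDeriv n w s = ∑ i, c i * iteratedDeriv i w s)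
    (hb : ∀ i < n, iteratedDeriv i w b = 0) {i : ℕ} (hi : i < n) :
    EqOn (iteratedDeriv i w) 0 (Icc a b) := by
  let A := LinearMap.toContinuousLinearMap (companionMap c)
  have hzero := eqOn_zero_of_hasDerivAt_of_lipschitzWith A.lipschitz (map_zero A)
    (f := fun t (j : Fin n) => iteratedDeriv j w t) (a := a) ?_ (funext fun j => hb j j.2)
  · exact fun s hs => congrFun (hzero hs) ⟨i, hi⟩
  intro t ht
  refine hasDerivAt_pi.2 fun j => ?_
  convert hw.hasDerivAt_iteratedDeriv j.2 t using 1
  show companionMap c _ j = _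
  simp only [companionMap, LinearMap.coe_mk, AddHom.coe_mk]
  split_ifs with h
  · rfl
  · rw [show (j : ℕ) + 1 = n by omega, hode t ht]

theorem integral_normSq_nonneg {a b : ℝ} (hab : a ≤ b) (f : ℝ → ℂ) :
    0 ≤ ∫ s in a..b, normSq (f s) :=
  integral_nonneg hab fun s _ => normSq_nonneg (f s)

theorem eqOn_zero_of_integral_normSq_eq_zero {f : ℝ → ℂ} {a b : ℝ} (hab : a < b)
    (hf : Continuous f) (h : ∫ s in a..b, normSq (f s) = 0) : EqOn f 0 (Icc a b) := fun _ hs =>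
  normSq_eq_zero.1 (eqOn_zero_of_intervalIntegral_eq_zero hab (continuous_normSq.comp hf)
    (fun s => normSq_nonneg (f s)) h hs)

theorem ofReal_integral_normSq {a b : ℝ} (f : ℝ → ℂ) :
    ((∫ s in a..b, normSq (f s) : ℝ) : ℂ) = ∫ s in a..b, conj (f s) * f s := by
  rw [← integral_ofReal]
  simp only [normSq_eq_conj_mul_self]

theorem re_neg_of_quadratic_eq_zero {a c : ℝ} {e l : ℂ} (ha : 0 < a) (hc : 0 ≤ c)
    (he : 0 < e.re) (hl : l ≠ 0) (h : a * l ^ 2 + e * l + c = 0) : l.re < 0 := by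
  have he' : e = -a * l - c * l⁻¹ := by
    field_simp
    linear_combination h
  have hre : e.re = -a * l.re - c * (l.re / normSq l) := by
    simp [he', mul_re, inv_re]
  by_contra! hl_re
  have : 0 ≤ c * (l.re / normSq l) := mul_nonneg hc (div_nonneg hl_re (normSq_nonneg l))
  nlinarith

namespace IsEigenpairP

variable {β η γ κ : ℝ} {l : ℂ} {w : ℝ → ℂ}

theorem boundary_ne_zero (h : IsEigenpairP β η γ κ l w) : w 1 ≠ 0 ∨ deriv w 1 ≠ 0 := by
  obtain ⟨hw, ⟨s₀, hs₀, hne⟩, hode, -, -, h21, h31⟩ := h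
  by_contra! hz
  have hvanish : ∀ i < 4, iteratedDeriv i w 1 = 0 := by
    intro i hi
    interval_cases i
    · simpa using hz.1
    · simpa using hz.2
    · linear_combination h21 - l * κ * hz.2
    · linear_combination h31 + ((γ - η ^ 2 : ℝ) : ℂ) * hz.2
  refine hne (eqOn_zero_of_iteratedDeriv_eq_sum
    ![-l ^ 2, -(2 * l * ((β * η : ℝ) : ℂ)), ((γ - η ^ 2 : ℝ) : ℂ), 0]
    (mod_cast hw) (fun s hs => ?_) hvanish (i := 0) four_pos hs₀)
  simp only [Fin.sum_univ_four, Fin.isValue, Matrix.cons_val, Fin.val_zero, Fin.val_one,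
    Fin.val_two, iteratedDeriv_zero, iteratedDeriv_one]
  linear_combination hode s hs

theorem integral_conj_mul_eq_zero (h : IsEigenpairP β η γ κ l w) :
    (∫ s in (0:ℝ)..1, conj (w s) * iteratedDeriv 4 w s)
      - (γ - η ^ 2 : ℝ) * (∫ s in (0:ℝ)..1, conj (w s) * iteratedDeriv 2 w s)
      + 2 * l * (β * η : ℝ) * (∫ s in (0:ℝ)..1, conj (w s) * deriv w s)
      + l ^ 2 * (∫ s in (0:ℝ)..1, conj (w s) * w s) = 0 := by
  obtain ⟨hw, -, hode, -⟩ := h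
  have hcont (k : ℕ) (hk : k ≤ 4) : Continuous (iteratedDeriv k w) :=
    hw.continuous_iteratedDeriv k (mod_cast hk)
  have : ∫ s in (0:ℝ)..1, (conj (w s) * iteratedDeriv 4 w s
      - (γ - η ^ 2 : ℝ) * (conj (w s) * iteratedDeriv 2 w s)
      + 2 * l * (β * η : ℝ) * (conj (w s) * deriv w s)
      + l ^ 2 * (conj (w s) * w s)) = 0 := by
    rw [integral_congr (g := fun _ => 0) fun s hs => ?_, intervalIntegral.integral_zero]
    rw [uIcc_of_le zero_le_one] at hs
    linear_combination conj (w s) * hode s hs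
  rwa [intervalIntegral.integral_add, intervalIntegral.integral_add, intervalIntegral.integral_sub,
    intervalIntegral.integral_const_mul, intervalIntegral.integral_const_mul,
    intervalIntegral.integral_const_mul] at this
  all_goals exact Continuous.intervalIntegrable (by fun_prop (disch := norm_num)) 0 1

theorem energy_identity (h : IsEigenpairP β η γ κ l w) :
    ((∫ s in (0:ℝ)..1, normSq (w s) : ℝ) : ℂ) * l ^ 2
      + (2 * ((β * η : ℝ) : ℂ) * (∫ s in (0:ℝ)..1, conj (w s) * deriv w s)
        + κ * normSq (deriv w 1)) * l
      + ((∫ s in (0:ℝ)..1, normSq (iteratedDeriv 2 w s))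
        + (γ - η ^ 2) * ∫ s in (0:ℝ)..1, normSq (deriv w s) : ℝ) = 0 := by
  have hweak := h.integral_conj_mul_eq_zero
  obtain ⟨hw, -, -, h0, h20, h21, h31⟩ := h
  have hibp (m k : ℕ) (hm : m < 4) (hk : k < 4) :=
    integral_conj_iteratedDeriv_mul_iteratedDeriv_succ (mod_cast hw) hm hk 0 1
  have i1 := hibp 0 3 (by norm_num) (by norm_num)
  have i2 := hibp 1 2 (by norm_num) (by norm_num)
  have i3 := hibp 0 1 (by norm_num) (by norm_num)
  simp only [iteratedDeriv_zero, iteratedDeriv_one, Nat.reduceAdd, h0, h20, map_zero, zero_mul,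
    sub_zero] at i1 i2 i3
  push_cast at hweak h31 ⊢
  simp only [ofReal_integral_normSq, normSq_eq_conj_mul_self]
  linear_combination hweak - i1 + i2 + (γ - η ^ 2 : ℂ) * i3 - conj (w 1) * h31
    + conj (deriv w 1) * h21

theorem integral_normSq_pos (h : IsEigenpairP β η γ κ l w) :
    0 < ∫ s in (0:ℝ)..1, normSq (w s) := by
  obtain ⟨hw, ⟨s₀, hs₀, hne⟩, -⟩ := h
  refine (integral_normSq_nonneg zero_le_one w).lt_of_ne fun h0 => hne ?_
  exact eqOn_zero_of_integral_normSq_eq_zero one_pos hw.continuous h0.symm hs₀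

theorem eigenvalue_ne_zero (h : IsEigenpairP β η γ κ l w) (hγ : η ^ 2 < γ) : l ≠ 0 := by
  rintro rfl
  have hE := h.energy_identity
  obtain ⟨hw, ⟨s₀, hs₀, hne⟩, -, h0, -⟩ := h
  simp only [ne_eq, OfNat.ofNat_ne_zero, not_false_eq_true, zero_pow, mul_zero, add_zero,
    zero_add] at hE
  norm_cast at hE
  have hN1 : ∫ s in (0:ℝ)..1, normSq (deriv w s) = 0 := by
    nlinarith [integral_normSq_nonneg zero_le_one (deriv w),
      integral_normSq_nonneg zero_le_one (iteratedDeriv 2 w)]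
  have hw' := eqOn_zero_of_integral_normSq_eq_zero one_pos (hw.continuous_deriv (by norm_num)) hN1
  have hderiv (x : ℝ) (hx : x ∈ Ico (0:ℝ) 1) : HasDerivWithinAt w 0 (Ici x) x := by
    simpa [hw' (Ico_subset_Icc_self hx)] using
      (hw.differentiable (by norm_num) x).hasDerivAt.hasDerivWithinAt (s := Ici x)
  have hconst := constant_of_has_deriv_right_zero hw.continuous.continuousOn hderiv
  exact hne (by rw [hconst s₀ hs₀, h0])

theorem re_damping_pos (h : IsEigenpairP β η γ κ l w) (hβ : 0 < β) (hη : 0 < η) (hκ : 0 < κ) :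
    0 < (2 * ((β * η : ℝ) : ℂ) * (∫ s in (0:ℝ)..1, conj (w s) * deriv w s)
      + κ * normSq (deriv w 1)).re := by
  have hb := h.boundary_ne_zero
  obtain ⟨hw, -, -, h0, -⟩ := h
  have hre := two_mul_re_integral_conj_mul_deriv (hw.of_le (by norm_num)) 0 1
  rw [h0, map_zero, sub_zero] at hre
  have hre' : (2 * ((β * η : ℝ) : ℂ) * (∫ s in (0:ℝ)..1, conj (w s) * deriv w s)
      + κ * normSq (deriv w 1)).re = β * η * normSq (w 1) + κ * normSq (deriv w 1) := by
    rw [← hre]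
    simp only [ofReal_mul, add_re, mul_re, re_ofNat, ofReal_re, ofReal_im, mul_zero, sub_zero,
      im_ofNat, mul_im, zero_mul, add_zero]
    ring
  rw [hre']
  rcases hb with hb | hb
  · exact add_pos_of_pos_of_nonneg (mul_pos (mul_pos hβ hη) (normSq_pos.2 hb))
      (mul_nonneg hκ.le (normSq_nonneg _))
  · exact add_pos_of_nonneg_of_pos (mul_nonneg (mul_pos hβ hη).le (normSq_nonneg _))
      (mul_pos hκ (normSq_pos.2 hb))

end IsEigenpairP

/-- if `η > 0` and `κ > 0`, every eigenvalue of problem (P) lies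
in the open left half-plane; in particular (P) has no purely imaginary
eigenvalues. -/
theorem eigenvalue_re_neg (β η γ κ : ℝ) (hβ : β ∈ Ioo (0:ℝ) 1) (hη : 0 < η)
    (hκ : 0 < κ) (hγ : η^2 < γ) (l : ℂ)
    (h : IsEigenvalueP β η γ κ l) : l.re < 0 := by
  obtain ⟨w, hw⟩ := h
  have hstiff : 0 ≤ (∫ s in (0:ℝ)..1, normSq (iteratedDeriv 2 w s))
      + (γ - η ^ 2) * ∫ s in (0:ℝ)..1, normSq (deriv w s) :=
    add_nonneg (integral_normSq_nonneg zero_le_one _)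
      (mul_nonneg (sub_nonneg.2 hγ.le) (integral_normSq_nonneg zero_le_one _))
  exact re_neg_of_quadratic_eq_zero hw.integral_normSq_pos hstiff (hw.re_damping_pos hβ.1 hη hκ)
    (hw.eigenvalue_ne_zero hγ) hw.energy_identity
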